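/- For Flynn's family f_t(x) = x^6 + 2x^5 + (2t+3)x^4 + 2x^3 + (t^2+1)x^2 + 2t(1-t)x + t^2 with t ∈ ℚ, the discriminant of f_t equals -4096·t^7·(9 - 104t + 432t^2 + 16t^3) up to the normalization D_t = u_0^{10}∏_{i<j}(α_i - α_j)^2; in particular, f_t is squarefree (and hence y^2 = f_t(x) defines a smooth genus-2 curve) if and only if t ≠ 0 and 9 - 104t + 432t^2 + 16t^3 ≠ 0. -/

import Mathlib

/-!
The product `∏_{i<j} (α_i - α_j)²` is the square of the Vandermonde determinant of the roots,
hence the determinant of the Hankel matrix `(p_{k+l})_{0 ≤ k, l < 6}` of their power sums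
`p_k = ∑ α_i ^ k`. Newton's identities give `p_1, …, p_5` from the coefficients of `f_t`, the
relation `∑_j c_j p_{k+j} = 0` (a consequence of `f_t(α_i) = 0`) gives `p_6, …, p_10`, and the
6 × 6 determinant of these polynomials in `t` is expanded directly. Over `ℚ̄`, `f_t` is squarefree
iff its roots are distinct, i.e. iff the Vandermonde determinant does not vanish.
-/

open Polynomial

noncomputable def flynn (t : ℚ) : Polynomial ℚ :=
  X ^ 6 + 2 * X ^ 5 + C (2 * t + 3) * X ^ 4 + 2 * X ^ 3 + C (t ^ 2 + 1) * X ^ 2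
    + C (2 * t * (1 - t)) * X + C (t ^ 2)

open Finset Matrix

section PowerSums

variable {R ι : Type*} [CommRing R] [Fintype ι]

def powerSum (α : ι → R) (k : ℕ) : R := ∑ i, α i ^ k

theorem sum_coeff_mul_powerSum_eq_zero {f : R[X]} {N : ℕ} (hN : f.natDegree < N) (α : ι → R)
    (hα : ∀ i, f.IsRoot (α i)) (k : ℕ) :
    ∑ j ∈ range N, f.coeff j * powerSum α (k + j) = 0 := by
  have h : ∑ i, α i ^ k * f.eval (α i) = 0 := by simp [(hα _).eq_zero]
  simp only [eval_eq_sum_range' hN, mul_sum] at h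
  rw [sum_comm] at h
  simpa only [powerSum, pow_add, mul_sum, mul_left_comm] using h

theorem coeff_prod_X_sub_C_card_sub (α : ι → R) {j : ℕ} (hj : j ≤ Fintype.card ι) :
    (∏ i, (X - C (α i))).coeff (Fintype.card ι - j) = (-1) ^ j * (univ.val.map α).esymm j := by
  have h := Multiset.prod_X_sub_C_coeff (univ.val.map α) (k := Fintype.card ι - j) (by simp)
  simp only [Multiset.map_map, Function.comp_def, Multiset.card_map, card_val, card_univ,
    Nat.sub_sub_self hj] at h
  exact h

theorem newton_identity_coeff (α : ι → R) {k : ℕ} (hk : k ≤ Fintype.card ι) :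
    ∑ j ∈ range k, (∏ i, (X - C (α i))).coeff (Fintype.card ι - j) * powerSum α (k - j)
      + k * (∏ i, (X - C (α i))).coeff (Fintype.card ι - k) = 0 := by
  have h := congrArg (MvPolynomial.aeval α) (MvPolynomial.mul_esymm_eq_sum ι R k)
  simp only [map_mul, map_natCast, map_pow, map_neg, map_one, map_sum,
    MvPolynomial.aeval_esymm_eq_multiset_esymm, MvPolynomial.psum, MvPolynomial.aeval_X] at h
  rw [sum_filter, Nat.sum_antidiagonal_eq_sum_range_succ_mk, sum_range_succ,
    if_neg (lt_irrefl k), add_zero, sum_congr rfl fun j hj => if_pos (mem_range.mp hj)] at h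
  rw [coeff_prod_X_sub_C_card_sub α hk,
    sum_congr rfl fun j hj => by rw [coeff_prod_X_sub_C_card_sub α ((mem_range.mp hj).le.trans hk)]]
  have hsign : ((-1 : R) ^ k) ^ 2 = 1 := by rw [← pow_mul, pow_mul']; simp
  unfold powerSum
  linear_combination (-1) ^ k * h -
    (∑ j ∈ range k, (-1) ^ j * (univ.val.map α).esymm j * ∑ i, α i ^ (k - j)) * hsign

end PowerSums

theorem prod_sub_sq_eq_det_vandermonde_sq {R : Type*} [CommRing R] {n : ℕ} (v : Fin n → R) :
    ∏ i, ∏ j ∈ univ.filter (fun j => i < j), (v i - v j) ^ 2 = (vandermonde v).det ^ 2 := by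
  simp_rw [det_vandermonde, filter_lt_eq_Ioi, ← prod_pow, sub_sq_comm]

theorem det_vandermonde_sq_eq_det_powerSum {R : Type*} [CommRing R] {n : ℕ} (v : Fin n → R) :
    (vandermonde v).det ^ 2 = (of fun k l : Fin n => powerSum v (k + l)).det := by
  nth_rw 1 [sq, ← det_transpose, ← det_mul]
  congr 1
  ext k l
  exact vandermonde_transpose_mul_vandermonde v k l

theorem Polynomial.Monic.exists_eq_prod_X_sub_C {K : Type*} [Field K] [IsAlgClosed K] {p : K[X]}
    (hp : p.Monic) {n : ℕ} (hn : p.natDegree = n) : ∃ α : Fin n → K, p = ∏ i, (X - C (α i)) := by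
  obtain ⟨l, hl⟩ := Quot.exists_rep p.roots
  have hlen : l.length = n := by
    rw [← hn, ← IsAlgClosed.card_roots_eq_natDegree, ← hl]; rfl
  subst hlen
  refine ⟨fun i => l[i.1], ?_⟩
  rw [Fin.prod_univ_fun_getElem l (fun a => X - C a), ← Multiset.prod_coe, ← Multiset.map_coe]
  exact (prod_multiset_X_sub_C_of_monic_of_roots_card_eq hp
    IsAlgClosed.card_roots_eq_natDegree).symm.trans (by rw [← hl]; rfl)

theorem flynn_monic (t : ℚ) : (flynn t).Monic := by
  unfold flynn; monicity!

theorem natDegree_flynn (t : ℚ) : (flynn t).natDegree = 6 := by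
  unfold flynn; compute_degree!

theorem det_hankel_flynn {R : Type*} [CommRing R] (u : R) (p : ℕ → R)
    (h0 : p 0 = 6) (h1 : p 1 = -2) (h2 : p 2 = -2 - 4 * u) (h3 : p 3 = 4 + 12 * u)
    (h4 : p 4 = -2 - 8 * u + 4 * u ^ 2) (h5 : p 5 = -2 - 30 * u - 20 * u ^ 2)
    (h6 : p 6 = 4 + 72 * u + 36 * u ^ 2 - 4 * u ^ 3)
    (h7 : p 7 = -2 - 42 * u + 42 * u ^ 2 + 28 * u ^ 3)
    (h8 : p 8 = -2 - 80 * u - 312 * u ^ 2 - 80 * u ^ 3 + 4 * u ^ 4)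
    (h9 : p 9 = 4 + 180 * u + 540 * u ^ 2 - 6 * u ^ 3 - 36 * u ^ 4)
    (h10 : p 10 = -2 - 100 * u - 50 * u ^ 2 + 740 * u ^ 3 + 140 * u ^ 4 - 4 * u ^ 5) :
    (of fun k l : Fin 6 => p (k + l)).det
      = -4096 * u ^ 7 * (9 - 104 * u + 432 * u ^ 2 + 16 * u ^ 3) := by
  simp only [det_succ_row_zero, Fin.sum_univ_succ, Fin.sum_univ_zero, submatrix_apply, of_apply,
    Fin.succ_succAbove_zero, Fin.succ_succAbove_succ, Fin.zero_succAbove, det_unique,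
    Fin.default_eq_zero]
  simp only [Fin.val_succ, Fin.val_zero]
  norm_num [h0, h1, h2, h3, h4, h5, h6, h7, h8, h9, h10]
  ring

/-- `n k` are Newton's identities and `r k` the recurrence of the power sums `p` of the roots of
`f_u`; each one determines the newest power sum. -/
theorem det_hankel_of_flynn_identities {R : Type*} [CommRing R] (u : R) (p : ℕ → R)
    (h0 : p 0 = 6)
    (n1 : p 1 + 2 = 0)
    (n2 : p 2 + 2 * p 1 + 2 * (2 * u + 3) = 0)
    (n3 : p 3 + 2 * p 2 + (2 * u + 3) * p 1 + 3 * 2 = 0)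
    (n4 : p 4 + 2 * p 3 + (2 * u + 3) * p 2 + 2 * p 1 + 4 * (u ^ 2 + 1) = 0)
    (n5 : p 5 + 2 * p 4 + (2 * u + 3) * p 3 + 2 * p 2 + (u ^ 2 + 1) * p 1
      + 5 * (2 * u * (1 - u)) = 0)
    (r0 : u ^ 2 * p 0 + 2 * u * (1 - u) * p 1 + (u ^ 2 + 1) * p 2 + 2 * p 3 + (2 * u + 3) * p 4
      + 2 * p 5 + p 6 = 0)
    (r1 : u ^ 2 * p 1 + 2 * u * (1 - u) * p 2 + (u ^ 2 + 1) * p 3 + 2 * p 4 + (2 * u + 3) * p 5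
      + 2 * p 6 + p 7 = 0)
    (r2 : u ^ 2 * p 2 + 2 * u * (1 - u) * p 3 + (u ^ 2 + 1) * p 4 + 2 * p 5 + (2 * u + 3) * p 6
      + 2 * p 7 + p 8 = 0)
    (r3 : u ^ 2 * p 3 + 2 * u * (1 - u) * p 4 + (u ^ 2 + 1) * p 5 + 2 * p 6 + (2 * u + 3) * p 7
      + 2 * p 8 + p 9 = 0)
    (r4 : u ^ 2 * p 4 + 2 * u * (1 - u) * p 5 + (u ^ 2 + 1) * p 6 + 2 * p 7 + (2 * u + 3) * p 8
      + 2 * p 9 + p 10 = 0) :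
    (of fun k l : Fin 6 => p (k + l)).det
      = -4096 * u ^ 7 * (9 - 104 * u + 432 * u ^ 2 + 16 * u ^ 3) := by
  have h1 : p 1 = -2 := by linear_combination n1
  have h2 : p 2 = -2 - 4 * u := by linear_combination n2 - 2 * h1
  have h3 : p 3 = 4 + 12 * u := by linear_combination n3 - 2 * h2 - (2 * u + 3) * h1
  have h4 : p 4 = -2 - 8 * u + 4 * u ^ 2 := by
    linear_combination n4 - 2 * h3 - (2 * u + 3) * h2 - 2 * h1
  have h5 : p 5 = -2 - 30 * u - 20 * u ^ 2 := by
    linear_combination n5 - 2 * h4 - (2 * u + 3) * h3 - 2 * h2 - (u ^ 2 + 1) * h1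
  have h6 : p 6 = 4 + 72 * u + 36 * u ^ 2 - 4 * u ^ 3 := by
    linear_combination r0 - 2 * h5 - (2 * u + 3) * h4 - 2 * h3 - (u ^ 2 + 1) * h2
      - 2 * u * (1 - u) * h1 - u ^ 2 * h0
  have h7 : p 7 = -2 - 42 * u + 42 * u ^ 2 + 28 * u ^ 3 := by
    linear_combination r1 - 2 * h6 - (2 * u + 3) * h5 - 2 * h4 - (u ^ 2 + 1) * h3
      - 2 * u * (1 - u) * h2 - u ^ 2 * h1
  have h8 : p 8 = -2 - 80 * u - 312 * u ^ 2 - 80 * u ^ 3 + 4 * u ^ 4 := by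
    linear_combination r2 - 2 * h7 - (2 * u + 3) * h6 - 2 * h5 - (u ^ 2 + 1) * h4
      - 2 * u * (1 - u) * h3 - u ^ 2 * h2
  have h9 : p 9 = 4 + 180 * u + 540 * u ^ 2 - 6 * u ^ 3 - 36 * u ^ 4 := by
    linear_combination r3 - 2 * h8 - (2 * u + 3) * h7 - 2 * h6 - (u ^ 2 + 1) * h5
      - 2 * u * (1 - u) * h4 - u ^ 2 * h3
  have h10 : p 10 = -2 - 100 * u - 50 * u ^ 2 + 740 * u ^ 3 + 140 * u ^ 4 - 4 * u ^ 5 := by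
    linear_combination r4 - 2 * h9 - (2 * u + 3) * h8 - 2 * h7 - (u ^ 2 + 1) * h6
      - 2 * u * (1 - u) * h5 - u ^ 2 * h4
  exact det_hankel_flynn u p h0 h1 h2 h3 h4 h5 h6 h7 h8 h9 h10

theorem flynn_discr_of_eq_prod {R : Type*} [CommRing R] [Algebra ℚ R] (t : ℚ) (α : Fin 6 → R)
    (hα : (flynn t).map (algebraMap ℚ R) = ∏ i, (X - C (α i))) :
    ∏ i, ∏ j ∈ univ.filter (fun j => i < j), (α i - α j) ^ 2
      = algebraMap ℚ R (-4096 * t ^ 7 * (9 - 104 * t + 432 * t ^ 2 + 16 * t ^ 3)) := by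
  have hcoeff : ∀ j, (∏ i, (X - C (α i))).coeff j = algebraMap ℚ R ((flynn t).coeff j) := by
    simp [← hα, coeff_map]
  have hroot (i : Fin 6) : ((flynn t).map (algebraMap ℚ R)).IsRoot (α i) := by
    rw [hα, IsRoot, eval_prod]
    exact prod_eq_zero (mem_univ i) (by simp)
  have newton (k : ℕ) (hk : k ≤ 6) := newton_identity_coeff α (k := k) (by simpa using hk)
  have recurrence := sum_coeff_mul_powerSum_eq_zero
    ((natDegree_map_le.trans (natDegree_flynn t).le).trans_lt (Nat.lt_succ_self 6)) α hroot
  simp only [Fintype.card_fin, hcoeff] at newton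
  simp only [coeff_map] at recurrence
  have n1 := newton 1 (by norm_num)
  have n2 := newton 2 (by norm_num)
  have n3 := newton 3 (by norm_num)
  have n4 := newton 4 (by norm_num)
  have n5 := newton 5 (by norm_num)
  have r0 := recurrence 0
  have r1 := recurrence 1
  have r2 := recurrence 2
  have r3 := recurrence 3
  have r4 := recurrence 4
  simp only [sum_range_succ, sum_range_zero, flynn, coeff_add, coeff_C_mul, coeff_X_pow, coeff_X,
    coeff_C, coeff_ofNat_mul] at n1 n2 n3 n4 n5 r0 r1 r2 r3 r4
  norm_num at n1 n2 n3 n4 n5 r0 r1 r2 r3 r4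
  simp only [map_ofNat] at n1 n2 n3 n4 n5 r0 r1 r2 r3 r4
  rw [prod_sub_sq_eq_det_vandermonde_sq, det_vandermonde_sq_eq_det_powerSum,
    det_hankel_of_flynn_identities _ _ (by simp [powerSum]) n1 n2 n3 n4 n5 r0 r1 r2 r3 r4]
  simp [map_ofNat]

/-- For Flynn's family `f_t`, the discriminant `∏_{i<j}(α_i - α_j)²` (with `u₀ = 1`)
equals `-4096·t⁷·(9 - 104t + 432t² + 16t³)`; in particular `f_t` is squarefree over `ℚ̄`
iff `t ≠ 0` and `9 - 104t + 432t² + 16t³ ≠ 0`. -/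
theorem flynn_discriminant (t : ℚ) :
    (∀ α : Fin 6 → AlgebraicClosure ℚ,
      (flynn t).map (algebraMap ℚ (AlgebraicClosure ℚ)) = ∏ i, (X - C (α i)) →
      ∏ i : Fin 6, ∏ j ∈ Finset.univ.filter (fun j => i < j), (α i - α j) ^ 2
        = algebraMap ℚ (AlgebraicClosure ℚ)
            (-4096 * t ^ 7 * (9 - 104 * t + 432 * t ^ 2 + 16 * t ^ 3))) ∧
    (Squarefree ((flynn t).map (algebraMap ℚ (AlgebraicClosure ℚ))) ↔
      (t ≠ 0 ∧ 9 - 104 * t + 432 * t ^ 2 + 16 * t ^ 3 ≠ 0)) := by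
  refine ⟨flynn_discr_of_eq_prod t, ?_⟩
  obtain ⟨α, hα⟩ := ((flynn_monic t).map (algebraMap ℚ (AlgebraicClosure ℚ))).exists_eq_prod_X_sub_C
    (by rw [natDegree_map, natDegree_flynn])
  rw [← PerfectField.separable_iff_squarefree, hα, separable_prod_X_sub_C_iff,
    ← det_vandermonde_ne_zero_iff, ← pow_ne_zero_iff two_ne_zero,
    ← prod_sub_sq_eq_det_vandermonde_sq, flynn_discr_of_eq_prod t α hα, ne_eq,
    map_eq_zero_iff _ (algebraMap ℚ _).injective]
  simp
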